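/- arXiv:2311.09592 — 6 statements merged into one kernel-verified Lean document; each statement's English description precedes it below -/
import Mathlib

section
/- Let W = (w_1, ..., w_n) be positive integers with sum 3t+1 for some positive integer t, and let W' = (w_1', ..., w_n') be nonnegative integers such that the sum over all i of |w_i - w_i'| is at most t. Then for any partition (A, B) of {1,...,n} with sum_{i in A} w_i > 2 * sum_{i in B} w_i, it holds that sum_{i in A} w_i' > sum_{i in B} w_i'. -/
/-- t-bounded adjustments preserve the qualified-allocation majority property. -/
theorem stmt0 (n t : ℕ) (ht : 0 < t) (w w' : Fin n → ℕ)
    (hpos : ∀ i, 0 < w i)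
    (hsum : ∑ i, w i = 3 * t + 1)
    (hbound : ∑ i, ((w i : ℤ) - (w' i : ℤ)).natAbs ≤ t)
    (A B : Finset (Fin n))
    (hunion : A ∪ B = Finset.univ) (hdisj : A ∩ B = ∅)
    (hmaj : ∑ i ∈ A, w i > 2 * ∑ i ∈ B, w i) :
    ∑ i ∈ A, w' i > ∑ i ∈ B, w' i := by
  have hdisj' : Disjoint A B := Finset.disjoint_iff_inter_eq_empty.mpr hdisj
  have hsplit : ∀ f : Fin n → ℕ, ∑ i ∈ A, f i + ∑ i ∈ B, f i = ∑ i, f i := by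
    intro f
    rw [← Finset.sum_union hdisj', hunion]
  have hAB : ∑ i ∈ A, w i + ∑ i ∈ B, w i = 3 * t + 1 := by
    rw [hsplit, hsum]
  have hB : ∑ i ∈ B, w i ≤ t := by omega
  have hA : ∑ i ∈ A, w i ≥ 2 * t + 1 := by omega
  have hdsplit : ∑ i ∈ A, ((w i : ℤ) - (w' i : ℤ)).natAbs
      + ∑ i ∈ B, ((w i : ℤ) - (w' i : ℤ)).natAbs ≤ t := by
    rw [hsplit]; exact hbound
  have hA' : (∑ i ∈ A, w i : ℤ) - ∑ i ∈ A, ((w i : ℤ) - (w' i : ℤ)).natAbs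
      ≤ ∑ i ∈ A, w' i := by
    push_cast
    rw [← Finset.sum_sub_distrib]
    apply Finset.sum_le_sum
    intro i _
    have := le_abs_self ((w i : ℤ) - (w' i : ℤ))
    omega
  have hB' : (∑ i ∈ B, w' i : ℤ) ≤ ∑ i ∈ B, w i + ∑ i ∈ B, ((w i : ℤ) - (w' i : ℤ)).natAbs := by
    push_cast
    rw [← Finset.sum_add_distrib]
    apply Finset.sum_le_sum
    intro i _
    have := le_abs_self ((w i : ℤ) - (w' i : ℤ))
    have := neg_abs_le ((w i : ℤ) - (w' i : ℤ))
    omega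
  have : (∑ i ∈ B, w' i : ℤ) < ∑ i ∈ A, w' i := by
    have hAg : (∑ i ∈ A, w i : ℤ) ≥ 2 * t + 1 := by exact_mod_cast hA
    have hBl : (∑ i ∈ B, w i : ℤ) ≤ t := by exact_mod_cast hB
    have hd : (∑ i ∈ A, ((w i : ℤ) - (w' i : ℤ)).natAbs : ℤ)
        + (∑ i ∈ B, ((w i : ℤ) - (w' i : ℤ)).natAbs : ℤ) ≤ t := by exact_mod_cast hdsplit
    push_cast at hA' hB' hd ⊢
    omega
  exact_mod_cast this
end

section
/- Let W = (w_1,...,w_n) be positive integers summing to 3t+1 for a positive integer t, and suppose AllocateSubID outputs (d_1,...,d_n) where d_i = f_g(w_i)/g for a positive integer g such that f_g is a t-bounded adjustment of W. Then (d_1,...,d_n) is a qualified allocation for W: for every partition (A,B) of {1,...,n} with sum_{i in A} w_i > 2 * sum_{i in B} w_i, it holds that sum_{i in A} d_i > sum_{i in B} d_i. -/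
/-- AllocateSubID with a t-bounded rounding f_g yields a qualified allocation. -/
theorem stmt3 (n t g : ℕ) (ht : 0 < t) (hg : 0 < g) (w : Fin n → ℕ)
    (hpos : ∀ i, 0 < w i) (hsum : ∑ i, w i = 3 * t + 1)
    (w' : Fin n → ℕ)
    (hround : ∀ i, w' i = if 2 * (w i % g) < g then w i - w i % g else w i + (g - w i % g))
    (hbounded : ∑ i, ((w i : ℤ) - (w' i : ℤ)).natAbs ≤ t)
    (d : Fin n → ℕ) (hd : ∀ i, d i = w' i / g)
    (A B : Finset (Fin n)) (hunion : A ∪ B = Finset.univ) (hdisj : A ∩ B = ∅)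
    (hmaj : ∑ i ∈ A, w i > 2 * ∑ i ∈ B, w i) :
    ∑ i ∈ A, d i > ∑ i ∈ B, d i := by
  have hdis : Disjoint A B := Finset.disjoint_iff_inter_eq_empty.mpr hdisj
  -- g * d i = w' i
  have hgd : ∀ i, g * d i = w' i := by
    intro i
    have hr := hround i
    have hlt : w i % g < g := Nat.mod_lt _ hg
    have hdm : g * (w i / g) + w i % g = w i := Nat.div_add_mod _ _
    have hdvd : g ∣ w' i := by
      rcases Nat.lt_or_ge (2 * (w i % g)) g with h | h
      · rw [hr, if_pos h]
        exact ⟨w i / g, by omega⟩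
      · rw [hr, if_neg (by omega)]
        exact ⟨w i / g + 1, by rw [Nat.mul_add, Nat.mul_one]; omega⟩
    rw [hd i]
    exact Nat.mul_div_cancel' hdvd
  have hsplit : ∀ f : Fin n → ℤ, ∑ i ∈ A, f i + ∑ i ∈ B, f i = ∑ i, f i := by
    intro f
    rw [← Finset.sum_union hdis, hunion]
  have hsplitN : ∀ f : Fin n → ℕ, ∑ i ∈ A, f i + ∑ i ∈ B, f i = ∑ i, f i := by
    intro f
    rw [← Finset.sum_union hdis, hunion]
  -- basic nat facts
  have hsb : ∑ i ∈ B, w i ≤ t := by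
    have := hsplitN w
    omega
  have hsa : ∑ i ∈ A, w i + ∑ i ∈ B, w i = 3 * t + 1 := by rw [hsplitN w, hsum]
  -- error bound in ℤ
  have h4 : ∑ i, |((w' i : ℤ) - (w i : ℤ))| ≤ (t : ℤ) := by
    calc ∑ i, |((w' i : ℤ) - (w i : ℤ))|
        = ∑ i, ((((w i : ℤ) - (w' i : ℤ)).natAbs : ℕ) : ℤ) := by
          apply Finset.sum_congr rfl
          intro i _
          rw [← Int.abs_eq_natAbs, abs_sub_comm]
      _ = ((∑ i, ((w i : ℤ) - (w' i : ℤ)).natAbs : ℕ) : ℤ) := by push_cast; ring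
      _ ≤ (t : ℤ) := by exact_mod_cast hbounded
  set ea := ∑ i ∈ A, ((w' i : ℤ) - (w i : ℤ)) with hea
  set eb := ∑ i ∈ B, ((w' i : ℤ) - (w i : ℤ)) with heb
  have h1 : |ea| ≤ ∑ i ∈ A, |((w' i : ℤ) - (w i : ℤ))| := Finset.abs_sum_le_sum_abs _ _
  have h2 : |eb| ≤ ∑ i ∈ B, |((w' i : ℤ) - (w i : ℤ))| := Finset.abs_sum_le_sum_abs _ _
  have h3 : ∑ i ∈ A, |((w' i : ℤ) - (w i : ℤ))| + ∑ i ∈ B, |((w' i : ℤ) - (w i : ℤ))|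
      = ∑ i, |((w' i : ℤ) - (w i : ℤ))| := hsplit _
  have hAe : ∑ i ∈ A, ((w' i : ℤ)) = (∑ i ∈ A, (w i : ℤ)) + ea := by
    rw [hea, Finset.sum_sub_distrib]; ring
  have hBe : ∑ i ∈ B, ((w' i : ℤ)) = (∑ i ∈ B, (w i : ℤ)) + eb := by
    rw [heb, Finset.sum_sub_distrib]; ring
  have hwa : ∑ i ∈ A, (w i : ℤ) = ((∑ i ∈ A, w i : ℕ) : ℤ) := by push_cast; ring
  have hwb : ∑ i ∈ B, (w i : ℤ) = ((∑ i ∈ B, w i : ℕ) : ℤ) := by push_cast; ring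
  have hdiff : ((∑ i ∈ A, w i : ℕ) : ℤ) - ((∑ i ∈ B, w i : ℕ) : ℤ) ≥ (t : ℤ) + 1 := by
    have h5 : ∑ i ∈ A, w i ≥ 2 * t + 1 := by omega
    have h6 : (∑ i ∈ B, w i : ℕ) ≤ t := hsb
    push_cast
    omega
  have hea1 : -|ea| ≤ ea := neg_abs_le ea
  have heb1 : eb ≤ |eb| := le_abs_self eb
  have key : ∑ i ∈ B, ((w' i : ℤ)) < ∑ i ∈ A, ((w' i : ℤ)) := by
    rw [hAe, hBe, hwa, hwb]
    linarith
  have keyd : (g : ℤ) * ∑ i ∈ B, (d i : ℤ) < (g : ℤ) * ∑ i ∈ A, (d i : ℤ) := by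
    calc (g : ℤ) * ∑ i ∈ B, (d i : ℤ) = ∑ i ∈ B, ((g * d i : ℕ) : ℤ) := by
          rw [Finset.mul_sum]; push_cast; ring
      _ = ∑ i ∈ B, ((w' i : ℤ)) := by
          apply Finset.sum_congr rfl; intro i _; rw [hgd i]
      _ < ∑ i ∈ A, ((w' i : ℤ)) := key
      _ = ∑ i ∈ A, ((g * d i : ℕ) : ℤ) := by
          apply Finset.sum_congr rfl; intro i _; rw [hgd i]
      _ = (g : ℤ) * ∑ i ∈ A, (d i : ℤ) := by rw [Finset.mul_sum]; push_cast; ring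
  have keyn : g * ∑ i ∈ B, d i < g * ∑ i ∈ A, d i := by exact_mod_cast keyd
  exact Nat.lt_of_mul_lt_mul_left keyn
end

section
/- Let p be prime with p > n, t < n, and let g generate a group G of order p. Given group elements cm_0, ..., cm_n in G, if for a uniformly random polynomial q of degree at most n-t-1 with dual coefficients c_tau^⊥ = q(tau)/prod_{j != tau}(tau - j) the check prod_{tau=0}^{n} cm_tau^{c_tau^⊥} = 1_G passes with probability greater than 1/p (over the choice of q), then there exists a polynomial f in Z_p[X] of degree at most t such that cm_tau = g^{f(tau)} for all tau in {0,...,n}. -/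
open Polynomial Finset

private lemma scrape_lc_basisDivisor {F : Type*} [Field F] {a b : F} :
    (Lagrange.basisDivisor a b).leadingCoeff = (a - b)⁻¹ := by
  unfold Lagrange.basisDivisor
  rw [leadingCoeff_mul, leadingCoeff_C, (monic_X_sub_C b).leadingCoeff, mul_one]

private lemma scrape_coeff_basis {F : Type*} [Field F] {ι : Type*} [DecidableEq ι]
    {s : Finset ι} {v : ι → F} {i : ι} (hvs : Set.InjOn v s) (hi : i ∈ s) :
    (Lagrange.basis s v i).coeff (s.card - 1) = Lagrange.nodalWeight s v i := by
  rw [← Lagrange.natDegree_basis hvs hi, coeff_natDegree]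
  unfold Lagrange.basis Lagrange.nodalWeight
  rw [leadingCoeff_prod]
  exact Finset.prod_congr rfl fun j _ => scrape_lc_basisDivisor

private lemma scrape_coeff_eq_sum {F : Type*} [Field F] {ι : Type*} [DecidableEq ι]
    (h : F[X]) (s : Finset ι) (v : ι → F) (hvs : Set.InjOn v s)
    (hdeg : h.degree < s.card) :
    h.coeff (s.card - 1) = ∑ i ∈ s, h.eval (v i) * Lagrange.nodalWeight s v i := by
  conv_lhs => rw [Lagrange.eq_interpolate hvs hdeg]
  rw [Lagrange.interpolate_apply, finset_sum_coeff]
  exact Finset.sum_congr rfl fun i hi => by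
    rw [coeff_C_mul, scrape_coeff_basis hvs hi, mul_comm]

private lemma scrape_deg_le {F : Type*} [Field F] (n : ℕ) (v : ℕ → F)
    (hvs : Set.InjOn v (Finset.range (n+1))) (f : F[X]) (hdeg : f.degree ≤ n)
    (M : ℕ) (hM : M ≤ n)
    (hc : ∀ m < M, ∑ τ ∈ Finset.range (n+1),
        (v τ)^m * f.eval (v τ) * Lagrange.nodalWeight (Finset.range (n+1)) v τ = 0) :
    f.degree ≤ (n - M : ℕ) := by
  induction M with
  | zero => simpa using hdeg
  | succ M ih =>
    have hMn : M ≤ n := Nat.le_of_succ_le hM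
    have ihd : f.degree ≤ (n - M : ℕ) := ih hMn (fun m hm => hc m (Nat.lt_succ_of_lt hm))
    have hkey : f.coeff (n - M) = 0 := by
      have hdh : (X ^ M * f : F[X]).degree < (Finset.range (n+1)).card := by
        rw [Finset.card_range]
        calc (X ^ M * f : F[X]).degree ≤ (X ^ M : F[X]).degree + f.degree := degree_mul_le _ _
          _ ≤ (M : WithBot ℕ) + (n - M : ℕ) := add_le_add (by simp [degree_X_pow]) ihd
          _ = ((M + (n - M) : ℕ) : WithBot ℕ) := by push_cast; ring
          _ < ((n + 1 : ℕ) : WithBot ℕ) := by rw [Nat.cast_lt]; omega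
      have hs := scrape_coeff_eq_sum (X ^ M * f) (Finset.range (n+1)) v hvs hdh
      rw [Finset.card_range] at hs
      simp only [Nat.add_sub_cancel] at hs
      have h2 : (X ^ M * f : F[X]).coeff n = f.coeff (n - M) := by
        have h3 := coeff_X_pow_mul f M (n - M)
        rwa [Nat.sub_add_cancel hMn] at h3
      rw [h2] at hs
      rw [hs, ← hc M (Nat.lt_succ_self M)]
      exact Finset.sum_congr rfl fun τ _ => by
        simp [mul_comm, mul_assoc, mul_left_comm]
    rw [degree_le_iff_coeff_zero] at ihd ⊢
    intro m hm
    rw [Nat.cast_lt] at hm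
    rcases Nat.lt_or_ge (n - M) m with h | h
    · exact ihd m (by rw [Nat.cast_lt]; omega)
    · have hme : m = n - M := by omega
      rw [hme]; exact hkey

/-- If the SCRAPE check on group elements cm_0,...,cm_n passes with probability
greater than 1/p over the random dual polynomial, then the cm's commit to the
evaluations of a degree-≤t polynomial. -/
theorem stmt6 (p n t : ℕ) [Fact p.Prime] (hpn : n < p) (htn : t < n)
    (G : Type) [CommGroup G] [Fintype G] [DecidableEq G] (hcard : Fintype.card G = p)
    (g : G) (hgen : ∀ x : G, x ∈ Subgroup.zpowers g)
    (cm : ℕ → G)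
    (hpass : Fintype.card (Fin (n - t) → ZMod p) <
      (Finset.univ.filter (fun a : Fin (n - t) → ZMod p =>
        ∏ τ ∈ Finset.range (n + 1),
          cm τ ^ (((∑ μ, a μ * (τ : ZMod p) ^ (μ : ℕ)) /
            ∏ j ∈ (Finset.range (n + 1)).erase τ, ((τ : ZMod p) - (j : ZMod p))).val)
        = 1)).card * p) :
    ∃ f : Polynomial (ZMod p), f.degree ≤ t ∧
      ∀ τ ∈ Finset.range (n + 1), cm τ = g ^ (f.eval (τ : ZMod p)).val := by
  haveI : NeZero p := ⟨(Fact.out : p.Prime).ne_zero⟩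
  have hord : orderOf g = p := by
    rw [orderOf_eq_card_of_forall_mem_zpowers hgen, Nat.card_eq_fintype_card, hcard]
  -- represent the commitments via discrete logs
  have hv : ∀ x : G, ∃ y : ZMod p, x = g ^ y.val := by
    intro x
    obtain ⟨k, hk⟩ := Subgroup.mem_zpowers_iff.mp (hgen x)
    refine ⟨(k : ZMod p), ?_⟩
    rw [← hk]
    have h2 : g ^ (((k : ZMod p).val : ℤ)) = g ^ k := by
      rw [zpow_eq_zpow_iff_modEq, hord]
      apply (ZMod.intCast_eq_intCast_iff _ _ _).mp
      push_cast
      simp [ZMod.natCast_val, ZMod.cast_id]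
    rw [← h2, zpow_natCast]
  have hpowed : ∀ (a b : ℕ), (a : ZMod p) = (b : ZMod p) → g ^ a = g ^ b := by
    intro a b hab
    rw [pow_eq_pow_iff_modEq, hord]
    exact (ZMod.natCast_eq_natCast_iff _ _ _).mp hab
  have hprod : ∀ (s : Finset ℕ) (u : ℕ → ZMod p),
      ∏ τ ∈ s, g ^ (u τ).val = g ^ (∑ τ ∈ s, u τ).val := by
    intro s u
    rw [prod_pow_eq_pow_sum]
    apply hpowed
    push_cast
    simp [ZMod.natCast_val, ZMod.cast_id]
  have hone : ∀ x : ZMod p, g ^ x.val = 1 ↔ x = 0 := by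
    intro x
    rw [← orderOf_dvd_iff_pow_eq_one, hord, ← ZMod.val_eq_zero]
    constructor
    · intro h; exact Nat.eq_zero_of_dvd_of_lt h x.val_lt
    · intro h; rw [h]; exact dvd_zero p
  have hmulpow : ∀ (x m : ZMod p), (g ^ x.val) ^ m.val = g ^ ((x * m).val) := by
    intro x m
    rw [← pow_mul]
    apply hpowed
    push_cast
    simp [ZMod.natCast_val, ZMod.cast_id]
  choose v hvv using fun τ => hv (cm τ)
  -- notation
  set D : ℕ → ZMod p := fun τ => ∏ j ∈ (Finset.range (n + 1)).erase τ,
    ((τ : ZMod p) - (j : ZMod p)) with hD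
  set w : Fin (n - t) → ZMod p := fun μ =>
    ∑ τ ∈ Finset.range (n + 1), (τ : ZMod p) ^ (μ : ℕ) * (D τ)⁻¹ * v τ with hw
  -- the check is a linear condition
  have hcheck : ∀ a : Fin (n - t) → ZMod p,
      (∏ τ ∈ Finset.range (n + 1),
        cm τ ^ (((∑ μ, a μ * (τ : ZMod p) ^ (μ : ℕ)) / D τ).val) = 1) ↔
      (∑ μ, a μ * w μ = 0) := by
    intro a
    have e1 : ∀ τ, cm τ ^ (((∑ μ, a μ * (τ : ZMod p) ^ (μ : ℕ)) / D τ).val)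
        = g ^ ((v τ * ((∑ μ, a μ * (τ : ZMod p) ^ (μ : ℕ)) / D τ)).val) := by
      intro τ; rw [hvv τ, hmulpow]
    rw [Finset.prod_congr rfl (fun τ _ => e1 τ), hprod, hone]
    have e2 : ∑ τ ∈ Finset.range (n + 1),
        v τ * ((∑ μ, a μ * (τ : ZMod p) ^ (μ : ℕ)) / D τ) = ∑ μ, a μ * w μ := by
      have e3 : ∀ τ ∈ Finset.range (n+1),
          v τ * ((∑ μ, a μ * (τ : ZMod p) ^ (μ : ℕ)) / D τ)
          = ∑ μ, a μ * ((τ : ZMod p) ^ (μ : ℕ) * (D τ)⁻¹ * v τ) := by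
        intro τ _
        rw [div_eq_mul_inv, Finset.sum_mul, Finset.mul_sum]
        exact Finset.sum_congr rfl fun μ _ => by ring
      rw [Finset.sum_congr rfl e3, Finset.sum_comm]
      exact Finset.sum_congr rfl fun μ _ => by rw [hw, Finset.mul_sum]
    rw [e2]
  -- the linear form must be identically zero
  have hwzero : ∀ μ, w μ = 0 := by
    by_contra hne
    push_neg at hne
    obtain ⟨μ0, hμ0⟩ := hne
    set S := Finset.univ.filter (fun a : Fin (n - t) → ZMod p =>
        ∏ τ ∈ Finset.range (n + 1),
          cm τ ^ (((∑ μ, a μ * (τ : ZMod p) ^ (μ : ℕ)) / D τ).val) = 1) with hS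
    have hinjS : Set.InjOn (fun (a : Fin (n - t) → ZMod p) =>
        (fun μ : {μ : Fin (n - t) // μ ≠ μ0} => a μ.1)) S := by
      intro a ha b hb hab
      simp only [hS, Finset.coe_filter, Set.mem_setOf_eq, Finset.mem_univ, true_and] at ha hb
      rw [hcheck] at ha hb
      have hsum : ∀ c : Fin (n - t) → ZMod p,
          ∑ μ, c μ * w μ = c μ0 * w μ0 + ∑ μ ∈ Finset.univ.erase μ0, c μ * w μ :=
        fun c => (Finset.add_sum_erase _ _ (Finset.mem_univ μ0)).symm
      have heq : ∀ μ ∈ Finset.univ.erase μ0, a μ * w μ = b μ * w μ := by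
        intro μ hμ
        have := congrFun hab ⟨μ, (Finset.mem_erase.mp hμ).1⟩
        simp only at this
        rw [this]
      have : a μ0 * w μ0 = b μ0 * w μ0 := by
        have h1 := hsum a; have h2 := hsum b
        rw [ha] at h1; rw [hb] at h2
        rw [Finset.sum_congr rfl heq] at h1
        linear_combination h2 - h1
      have hμ0eq : a μ0 = b μ0 := mul_right_cancel₀ hμ0 this
      funext μ
      by_cases hμ : μ = μ0
      · rw [hμ, hμ0eq]
      · exact congrFun hab ⟨μ, hμ⟩
    have hcardsub : Fintype.card {μ : Fin (n - t) // μ ≠ μ0} = (n - t) - 1 := by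
      rw [Fintype.card_subtype_compl, Fintype.card_subtype_eq, Fintype.card_fin]
    have hcardle : S.card ≤ p ^ ((n - t) - 1) := by
      have := Finset.card_le_card_of_injOn _ (fun a _ => Finset.mem_univ _) hinjS
      rwa [Finset.card_univ, Fintype.card_fun, hcardsub, ZMod.card] at this
    have hcards : Fintype.card (Fin (n - t) → ZMod p) = p ^ (n - t) := by
      rw [Fintype.card_fun, ZMod.card, Fintype.card_fin]
    have hnt : 1 ≤ n - t := by omega
    have : S.card * p ≤ p ^ (n - t) := by
      calc S.card * p ≤ p ^ ((n - t) - 1) * p := Nat.mul_le_mul_right p hcardle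
        _ = p ^ ((n - t) - 1 + 1) := (pow_succ p _).symm
        _ = p ^ (n - t) := by congr 1; omega
    rw [hcards] at hpass
    exact absurd hpass (not_lt.mpr this)
  -- build the interpolation polynomial
  have hinj : Set.InjOn (fun τ : ℕ => (τ : ZMod p)) (Finset.range (n + 1)) := by
    intro i hi j hj h
    have hi' : i < n + 1 := by simpa using hi
    have hj' : j < n + 1 := by simpa using hj
    have h1 : (i : ZMod p).val = i :=
      ZMod.val_cast_of_lt (Nat.lt_of_lt_of_le hi' (Nat.succ_le_of_lt hpn))
    have h2 : (j : ZMod p).val = j :=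
      ZMod.val_cast_of_lt (Nat.lt_of_lt_of_le hj' (Nat.succ_le_of_lt hpn))
    simp only at h
    rw [← h1, ← h2, h]
  set f : Polynomial (ZMod p) :=
    Lagrange.interpolate (Finset.range (n + 1)) (fun τ : ℕ => (τ : ZMod p)) v with hf
  have heval : ∀ τ ∈ Finset.range (n + 1), f.eval ((τ : ZMod p)) = v τ := by
    intro τ hτ
    exact Lagrange.eval_interpolate_at_node (r := v) hinj hτ
  have hdegn : f.degree ≤ (n : ℕ) := by
    have := Lagrange.degree_interpolate_le (r := v) hinj
    rwa [Finset.card_range, Nat.add_sub_cancel] at this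
  have hweight : ∀ τ ∈ Finset.range (n + 1),
      Lagrange.nodalWeight (Finset.range (n + 1)) (fun τ : ℕ => (τ : ZMod p)) τ
        = (D τ)⁻¹ := by
    intro τ _
    rw [Lagrange.nodalWeight, hD, ← Finset.prod_inv_distrib]
  have hc : ∀ m < n - t, ∑ τ ∈ Finset.range (n + 1),
      ((τ : ZMod p)) ^ m * f.eval ((τ : ZMod p)) *
        Lagrange.nodalWeight (Finset.range (n + 1)) (fun τ : ℕ => (τ : ZMod p)) τ = 0 := by
    intro m hm
    have h0 := hwzero ⟨m, hm⟩
    simp only [hw] at h0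
    rw [← h0]
    refine Finset.sum_congr rfl fun τ hτ => ?_
    rw [heval τ hτ, hweight τ hτ]
    ring
  have hdegt : f.degree ≤ (t : ℕ) := by
    have := scrape_deg_le n (fun τ : ℕ => (τ : ZMod p)) hinj f hdegn (n - t)
      (Nat.sub_le n t) hc
    rwa [Nat.sub_sub_self htn.le] at this
  refine ⟨f, hdegt, fun τ hτ => ?_⟩
  rw [heval τ hτ]
  exact hvv τ
end

section
/- Let p be prime, p > n, 0 < t+1 <= n, and fix a secret s in Z_p and a set C of at most t indices in {1,...,n}. If f is drawn uniformly from degree-<=t polynomials in Z_p[X] with f(0) = s, then the vector of shares (f(i))_{i in C} is uniformly distributed on Z_p^{|C|}. In particular, any t or fewer shares are statistically independent of the secret s. -/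
/-!
The shares are `s` plus a linear function of the coefficients `a`, namely evaluation of
`∑ μ, a μ X^(μ+1)` at the distinct nonzero points of `C`. This linear map is onto `Z_p^C`: to
hit `b`, interpolate the values `b i / i` at the points of `C` by some `q` of degree `< |C| ≤ t`
and take the coefficients of `X * q`. Every fibre is then a coset of the kernel, which has
`p ^ (t - |C|)` elements by rank–nullity.
-/
open Finset Polynomial

theorem LinearMap.card_fiber_eq_of_surjective {K V W : Type*} [Field K] [Fintype K]
    [AddCommGroup V] [Module K V] [Fintype V] [AddCommGroup W] [Module K W]
    [FiniteDimensional K W] [DecidableEq W] (L : V →ₗ[K] W) (hL : Function.Surjective L)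
    (b : W) : #{a | L a = b} = Fintype.card K ^ (Module.finrank K V - Module.finrank K W) := by
  classical
  have hker : Module.finrank K V - Module.finrank K W = Module.finrank K (LinearMap.ker L) := by
    rw [← L.finrank_range_add_finrank_ker, LinearMap.range_eq_top.mpr hL, finrank_top,
      Nat.add_sub_cancel_left]
  rw [AddMonoidHom.card_fiber_eq_of_mem_range L (hL b) (hL 0), hker,
    ← Module.card_eq_pow_finrank, ← Fintype.card_coe]
  exact Fintype.card_congr (Equiv.subtypeEquivRight fun a => by simp)

theorem Polynomial.sum_fin_coeff_mul_pow_succ {R : Type*} [CommSemiring R] {q : R[X]} {t : ℕ}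
    (hq : q.degree < t) (x : R) :
    ∑ μ : Fin t, q.coeff μ * x ^ ((μ : ℕ) + 1) = x * q.eval x := by
  rw [sum_fin (fun i c => c * x ^ (i + 1)) (fun _ => zero_mul _) hq, eval_eq_sum, sum_def,
    sum_def, Finset.mul_sum]
  exact Finset.sum_congr rfl fun _ _ => by ring

section Shamir

variable {K ι : Type*} [Field K]

def shareMap (x : ι → K) (t : ℕ) : (Fin t → K) →ₗ[K] ι → K where
  toFun a i := ∑ μ, a μ * x i ^ ((μ : ℕ) + 1)
  map_add' a b := by ext i; simp only [Pi.add_apply, add_mul, sum_add_distrib]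
  map_smul' c a := by ext i; simp only [Pi.smul_apply, smul_eq_mul, mul_sum, mul_assoc,
    RingHom.id_apply]

@[simp]
theorem shareMap_apply (x : ι → K) (t : ℕ) (a : Fin t → K) (i : ι) :
    shareMap x t a i = ∑ μ, a μ * x i ^ ((μ : ℕ) + 1) := rfl

theorem shareMap_surjective [Fintype ι] [DecidableEq ι] {x : ι → K} (hx : Function.Injective x)
    (hx0 : ∀ i, x i ≠ 0) {t : ℕ} (ht : Fintype.card ι ≤ t) :
    Function.Surjective (shareMap x t) := by
  intro b
  -- `X * q` vanishes at `0` and takes the value `b i` at `x i`.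
  set q := Lagrange.interpolate univ x (fun i => b i / x i)
  have hdeg : q.degree < t :=
    (Lagrange.degree_interpolate_lt _ hx.injOn).trans_le (by exact_mod_cast ht)
  refine ⟨fun μ => q.coeff μ, funext fun i => ?_⟩
  rw [shareMap_apply, sum_fin_coeff_mul_pow_succ hdeg,
    Lagrange.eval_interpolate_at_node _ hx.injOn (mem_univ i), mul_div_cancel₀ _ (hx0 i)]

end Shamir

theorem stmt9_general (p n t : ℕ) [Fact p.Prime] (hpn : n < p)
    (s : ZMod p) (C : Finset ℕ) (hC : C ⊆ Finset.Icc 1 n) (hCcard : C.card ≤ t)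
    (y : ℕ → ZMod p) :
    (Finset.univ.filter (fun a : Fin t → ZMod p =>
        ∀ i ∈ C, s + ∑ μ, a μ * (i : ZMod p) ^ ((μ : ℕ) + 1) = y i)).card
      = p ^ (t - C.card) := by
  set x : C → ZMod p := fun i => ((i : ℕ) : ZMod p)
  have hval : ∀ i : C, (x i).val = i := fun i =>
    ZMod.val_cast_of_lt ((mem_Icc.mp (hC i.2)).2.trans_lt hpn)
  have hx : Function.Injective x := fun i j h => Subtype.ext (by rw [← hval i, ← hval j, h])
  have hx0 : ∀ i, x i ≠ 0 := fun i h => by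
    have := (mem_Icc.mp (hC i.2)).1
    rw [← hval i, h, ZMod.val_zero] at this
    omega
  have hfiber : ∀ a : Fin t → ZMod p, (∀ i ∈ C, s + ∑ μ, a μ * (i : ZMod p) ^ ((μ : ℕ) + 1) = y i)
      ↔ shareMap x t a = fun i : C => y i - s := by
    intro a
    simp only [funext_iff, shareMap_apply, Subtype.forall, eq_sub_iff_add_eq', x]
  simp_rw [hfiber]
  rw [(shareMap x t).card_fiber_eq_of_surjective
      (shareMap_surjective hx hx0 (by rwa [Fintype.card_coe])),
    ZMod.card, Module.finrank_fin_fun, Module.finrank_fintype_fun_eq_card, Fintype.card_coe]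

/-- Perfect secrecy of Shamir sharing: for a uniform degree-≤t polynomial with f(0) = s,
any ≤ t shares are uniformly distributed (each value vector has exactly p^(t-|C|) preimages). -/
theorem stmt9 (p n t : ℕ) [Fact p.Prime] (hpn : n < p) (htn : t + 1 ≤ n)
    (s : ZMod p) (C : Finset ℕ) (hC : C ⊆ Finset.Icc 1 n) (hCcard : C.card ≤ t)
    (y : ℕ → ZMod p) :
    (Finset.univ.filter (fun a : Fin t → ZMod p =>
        ∀ i ∈ C, s + ∑ μ, a μ * (i : ZMod p) ^ ((μ : ℕ) + 1) = y i)).card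
      = p ^ (t - C.card) :=
  stmt9_general p n t hpn s C hC hCcard y
end

section
/- In the extended broadcast protocol, assume: (a) the PBB satisfies validity and agreement, (b) a sampled committee has an honest majority, and (c) the DDN returns a registered data block whenever at least one honest registered provider remains active. Then the protocol satisfies validity: if the sender is honest with message v, then every honest receiver outputs v. -/
/-- Validity of the extended broadcast channel: if the sender is honest with message v,
every honest receiver outputs v (assuming multicast validity, honest-majority committee
voting via the hash check against the posted digest, the strict-majority decision rule,
and the DDN/output rule). -/
theorem stmt15 (n : ℕ) (V D : Type) [DecidableEq D] (Hash : V → D)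
    (H K : Finset (Fin n)) (v : V) (bid : D) (hbid : bid = Hash v)
    (received : Fin n → Option V) (vote : Fin n → Bool)
    (retrieve : Option V) (final : Bool) (out : Fin n → Option V)
    -- multicast validity: the honest sender's message reaches all honest receivers
    (hrecv : ∀ i ∈ H, received i = some v)
    -- honest committee members vote according to the hash check
    (hvote : ∀ k ∈ K ∩ H, (vote k = true ↔ ∃ u, received k = some u ∧ Hash u = bid))
    -- honest-majority committee
    (hmaj : K.card < 2 * (K ∩ H).card)
    -- PBB-based decision: final = 1 iff a strict majority of committee votes endorse
    (hfinal : final = true ↔ K.card < 2 * (K.filter (fun k => vote k = true)).card)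
    -- output rule of honest receivers
    (hout : ∀ i ∈ H, out i =
      if final = true then
        (match received i with
          | some u => if Hash u = bid then some u else retrieve
          | none => retrieve)
      else none) :
    ∀ i ∈ H, out i = some v := by
  have hsub : K ∩ H ⊆ K.filter (fun k => vote k = true) := by
    intro k hk
    have hkK := Finset.mem_inter.mp hk
    refine Finset.mem_filter.mpr ⟨hkK.1, ?_⟩
    exact (hvote k hk).mpr ⟨v, hrecv k hkK.2, hbid.symm⟩
  have hfin : final = true :=
    hfinal.mpr (lt_of_lt_of_le hmaj (by
      exact Nat.mul_le_mul_left 2 (Finset.card_le_card hsub)))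
  intro i hi
  rw [hout i hi, hfin, hrecv i hi]
  simp [← hbid]
end

section
/- Let n and t satisfy n >= 2t+1, let Qual be the set of qualified dealers at the end of the Any-Trust DKG, and assume (i) every broadcast transcript in Qual passes the SCRAPE degree check, so each corresponds to a degree-<=t polynomial f_j with cm_i^{(j)} = g^{f_j(i)}, (ii) complaints are unforgeable (a valid complaint against dealer j at index i exists if and only if the ciphertext c_i^{(j)} does not decrypt to f_j(i)), and (iii) every honest party's complaint reaches the broadcast channel. Then every honest party P_i holds sk_i = f(i) where f = sum_{j in Qual} f_j, and pk = g^{f(0)}, pk_i = g^{f(i)} for all i; i.e., the protocol is t-correct. -/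
lemma pow_val_add {p : ℕ} [Fact p.Prime] {G : Type} [CommGroup G] [Fintype G]
    (hcard : Fintype.card G = p) (g : G) (a b : ZMod p) :
    g ^ (a + b).val = g ^ a.val * g ^ b.val := by
  have hp : g ^ p = 1 := by rw [← hcard]; exact pow_card_eq_one
  have : NeZero p := ⟨(Fact.out : p.Prime).ne_zero⟩
  rw [← pow_add, ZMod.val_add]
  conv_rhs => rw [← Nat.mod_add_div (a.val + b.val) p]
  rw [pow_add, pow_mul, hp, one_pow, mul_one]

lemma prod_pow_val {p : ℕ} [Fact p.Prime] {G : Type} [CommGroup G] [Fintype G]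
    (hcard : Fintype.card G = p) (g : G) {ι : Type} (s : Finset ι)
    (v : ι → ZMod p) (c : ι → G) (h : ∀ j ∈ s, c j = g ^ (v j).val) :
    ∏ j ∈ s, c j = g ^ (∑ j ∈ s, v j).val := by
  classical
  induction s using Finset.induction_on with
  | empty => simp
  | @insert b s' hx ih =>
    rw [Finset.prod_insert hx, Finset.sum_insert hx, pow_val_add hcard,
      h b (Finset.mem_insert_self b s'),
      ih fun j hj => h j (Finset.mem_insert_of_mem hj)]

/-- t-correctness of the Any-Trust DKG: under (i) the SCRAPE degree check,
(ii) unforgeable complaints, and (iii) delivery of honest complaints, there is a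
degree-≤t polynomial f with pk = g^{f(0)}, pk_τ = g^{f(τ)}, and every honest party's
aggregated share equals f at its evaluation point. -/
theorem stmt17 (p n t : ℕ) [Fact p.Prime] (hn : 2 * t + 1 ≤ n)
    (G : Type) [CommGroup G] [Fintype G] (hcard : Fintype.card G = p) (g : G)
    (ι : Type) (Qual : Finset ι)
    (fj : ι → Polynomial (ZMod p))
    (cm : ι → ℕ → G)
    (H : Finset (Fin n))
    (dec : Fin n → ι → ZMod p)
    (complaint : Fin n → ι → Prop)
    -- (i) every qualified transcript commits to a degree-≤t polynomial
    (hi : ∀ j ∈ Qual, (fj j).degree ≤ t ∧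
      ∀ τ : ℕ, cm j τ = g ^ ((fj j).eval ((τ : ℕ) : ZMod p)).val)
    -- (ii) complaints are unforgeable: a valid complaint of party i against dealer j
    -- exists iff the decrypted share differs from f_j evaluated at i's point
    (hii : ∀ i : Fin n, ∀ j : ι,
      (complaint i j ↔ dec i j ≠ (fj j).eval (((i : ℕ) + 1 : ℕ) : ZMod p)))
    -- (iii) every honest party's complaint reaches the broadcast channel and disqualifies
    (hiii : ∀ i ∈ H, ∀ j : ι, complaint i j → j ∉ Qual) :
    ∃ f : Polynomial (ZMod p), f.degree ≤ t ∧
      (∀ i ∈ H, ∑ j ∈ Qual, dec i j = f.eval (((i : ℕ) + 1 : ℕ) : ZMod p)) ∧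
      (∏ j ∈ Qual, cm j 0) = g ^ (f.eval 0).val ∧
      (∀ τ : ℕ, (∏ j ∈ Qual, cm j τ) = g ^ (f.eval ((τ : ℕ) : ZMod p)).val) := by
  have key : ∀ τ : ℕ, (∏ j ∈ Qual, cm j τ)
      = g ^ (((∑ j ∈ Qual, fj j).eval ((τ : ℕ) : ZMod p)).val) := by
    intro τ
    rw [Polynomial.eval_finset_sum]
    exact prod_pow_val hcard g Qual _ _ fun j hj => (hi j hj).2 τ
  refine ⟨∑ j ∈ Qual, fj j, ?_, ?_, ?_, key⟩
  · exact (Polynomial.degree_sum_le _ _).trans (Finset.sup_le fun j hj => (hi j hj).1)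
  · intro i hiH
    rw [Polynomial.eval_finset_sum]
    refine Finset.sum_congr rfl fun j hj => ?_
    by_contra hne
    exact hiii i hiH j ((hii i j).2 hne) hj
  · simpa using key 0
end
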